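/- For any indices r ≠ s with 1 ≤ r ≤ q_b and 1 ≤ s ≤ q_b, the vector e_r − e_s (difference of standard basis vectors) is an eigenvector of the nested-case transfer matrix T with eigenvalue λ_a = (ω_in − ω_out)/(ω_in + (q_b − 1)·ω_out + (q⋆ − q_b)·γ·ω_out); in particular λ_a is an eigenvalue of T. -/

import Mathlib

open Matrix BigOperators

/-- The nested-case transfer matrix `T` of CRSBM: coordinates are indexed
by `Fin qs` (the first `qb` coordinates correspond to the brother communities
of node `i`'s own category). -/
noncomputable def nestedT (qs qb : ℕ) (γ ωin ωout : ℝ) :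
    Matrix (Fin qs) (Fin qs) ℝ :=
  let Z : ℝ := (qb : ℝ) * γ + ((qs : ℝ) - (qb : ℝ))
  let ψ : Fin qs → ℝ := fun r => if (r : ℕ) < qb then γ / Z else 1 / Z
  let F : Matrix (Fin qs) (Fin qs) ℝ :=
    Matrix.diagonal (fun r => if (r : ℕ) < qb then (1 : ℝ) else γ)
  let Ω : Matrix (Fin qs) (Fin qs) ℝ :=
    Matrix.of fun r s => if r = s then ωin else ωout
  let M : Matrix (Fin qs) (Fin qs) ℝ := Matrix.diagonal ψ * Ω * F
  let D : Matrix (Fin qs) (Fin qs) ℝ := Matrix.diagonal (fun r => ∑ s, M r s)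
  (1 - Matrix.vecMulVec ψ (fun _ => 1)) * (D⁻¹ * M)

/-!
Write `v = e_r - e_s` with `r, s < qb`. The factors `diag F`, `Ω` and `diag ψ` of `M` each act on
`v` as a scalar: `F` and `ψ` take equal values at `r` and `s`, and `Ω = (ωin - ωout) I + ωout J`
with `J v = 0` since the entries of `v` sum to zero. The row sums of `M` at `r` and `s` agree too,
so `D⁻¹` also acts as a scalar, and finally `(I - ψ 1ᵀ) v = v`. The eigenvalue is the product of
these scalars, in which `ψ_r = γ / Z` cancels.
-/

open Finset

namespace Matrix

variable {ι R : Type*} [Fintype ι] [DecidableEq ι]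

theorem of_ite_eq_mulVec [CommRing R] (a b : R) (w : ι → R) :
    of (fun i j => if i = j then a else b) *ᵥ w = fun i => b * ∑ j, w j + (a - b) * w i := by
  funext i
  have hsplit : ∀ j, (if i = j then a else b) * w j
      = b * w j + if i = j then (a - b) * w j else 0 := by
    intro j; split_ifs <;> ring
  simp only [mulVec, dotProduct, of_apply, hsplit, sum_add_distrib, mul_sum, sum_ite_eq,
    mem_univ, if_true]

theorem of_ite_eq_mulVec_of_sum_eq_zero [CommRing R] (a b : R) {v : ι → R}
    (hv : ∑ i, v i = 0) : of (fun i j => if i = j then a else b) *ᵥ v = (a - b) • v := by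
  rw [of_ite_eq_mulVec, hv]
  funext i
  simp

theorem diagonal_mulVec_single_sub_single [CommRing R] (d : ι → R) {r s : ι} (h : d r = d s) :
    diagonal d *ᵥ (Pi.single r 1 - Pi.single s 1) =
      d r • (Pi.single r (1 : R) - Pi.single s 1) := by
  rw [mulVec_sub, diagonal_mulVec_single, diagonal_mulVec_single, ← h, smul_sub,
    ← Pi.single_smul', ← Pi.single_smul', smul_eq_mul]

omit [DecidableEq ι] in
theorem vecMulVec_one_mulVec_of_sum_eq_zero [CommRing R] (u : ι → R) {v : ι → R}
    (hv : ∑ i, v i = 0) : vecMulVec u (fun _ => 1) *ᵥ v = 0 := by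
  rw [vecMulVec_mulVec, ← Pi.one_def, one_dotProduct, hv, MulOpposite.op_zero, zero_smul]

theorem inv_diagonal_of_ne_zero {K : Type*} [Field K] {d : ι → K} (hd : ∀ i, d i ≠ 0) :
    (diagonal d)⁻¹ = diagonal d⁻¹ :=
  inv_eq_right_inv <| by
    rw [diagonal_mul_diagonal, ← diagonal_one]
    exact congrArg diagonal (funext fun i => mul_inv_cancel₀ (hd i))

theorem hasEigenvalue_toLin'_of_mulVec_eq_smul {K : Type*} [Field K] {A : Matrix ι ι K}
    {μ : K} {v : ι → K} (hv : v ≠ 0) (h : A *ᵥ v = μ • v) :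
    Module.End.HasEigenvalue (toLin' A) μ :=
  Module.End.hasEigenvalue_of_hasEigenvector
    ⟨by rw [Module.End.mem_eigenspace_iff, toLin'_apply, h], hv⟩

end Matrix

theorem Pi.single_sub_single_ne_zero {ι R : Type*} [DecidableEq ι] [Ring R] [Nontrivial R]
    {r s : ι} (hrs : r ≠ s) : (Pi.single r 1 - Pi.single s 1 : ι → R) ≠ 0 := by
  intro h
  simpa [hrs] using congrFun h r

theorem Pi.sum_single_sub_single {ι R : Type*} [Fintype ι] [DecidableEq ι] [Ring R] (r s : ι) :
    ∑ i, (Pi.single r 1 - Pi.single s 1 : ι → R) i = 0 := by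
  simp

theorem Fin.sum_ite_val_lt {R : Type*} [CommRing R] {n k : ℕ} (h : k ≤ n) (a b : R) :
    ∑ i : Fin n, (if (i : ℕ) < k then a else b) = k * a + (n - k : ℕ) * b := by
  have hlt : #{i : Fin n | (i : ℕ) < k} = k := by
    rw [Fin.card_filter_val_lt, min_eq_right h]
  have hge : #{i : Fin n | ¬ (i : ℕ) < k} = n - k := by
    rw [filter_not, card_sdiff_of_subset (filter_subset _ _), hlt, card_univ, Fintype.card_fin]
  rw [sum_ite, Finset.sum_const, Finset.sum_const, hlt, hge, nsmul_eq_mul, nsmul_eq_mul]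

-- The `Z`, `ψ`, diagonal of `F`, and `M` inside `nestedT`.
noncomputable def nestedZ (qs qb : ℕ) (γ : ℝ) : ℝ := (qb : ℝ) * γ + ((qs : ℝ) - (qb : ℝ))

noncomputable def nestedPsi (qs qb : ℕ) (γ : ℝ) : Fin qs → ℝ :=
  fun r => if (r : ℕ) < qb then γ / nestedZ qs qb γ else 1 / nestedZ qs qb γ

def nestedWeight (qs qb : ℕ) (γ : ℝ) : Fin qs → ℝ := fun r => if (r : ℕ) < qb then 1 else γ

noncomputable def nestedM (qs qb : ℕ) (γ ωin ωout : ℝ) : Matrix (Fin qs) (Fin qs) ℝ :=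
  diagonal (nestedPsi qs qb γ) * of (fun r s => if r = s then ωin else ωout) *
    diagonal (nestedWeight qs qb γ)

section Nested

variable {qs qb : ℕ} {γ ωin ωout : ℝ}

theorem nestedT_eq : nestedT qs qb γ ωin ωout =
    (1 - vecMulVec (nestedPsi qs qb γ) fun _ => 1) *
      ((diagonal fun r => ∑ s, nestedM qs qb γ ωin ωout r s)⁻¹ * nestedM qs qb γ ωin ωout) :=
  rfl

theorem nestedZ_pos (hγ : 1 < γ) (hqs : 0 < qs) : 0 < nestedZ qs qb γ := by
  have hqs' : (1 : ℝ) ≤ qs := by exact_mod_cast hqs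
  have hqb : (0 : ℝ) ≤ qb * (γ - 1) := mul_nonneg qb.cast_nonneg (sub_nonneg.2 hγ.le)
  unfold nestedZ
  linarith

theorem nestedPsi_pos (hγ : 1 < γ) (t : Fin qs) : 0 < nestedPsi qs qb γ t := by
  have hZ := nestedZ_pos (qb := qb) hγ (Fin.pos t)
  have hγ0 : 0 < γ := one_pos.trans hγ
  unfold nestedPsi
  split_ifs <;> positivity

theorem nestedWeight_pos (hγ : 0 < γ) (t : Fin qs) : 0 < nestedWeight qs qb γ t := by
  unfold nestedWeight
  split_ifs <;> positivity

theorem nestedWeight_sum (h : qb ≤ qs) :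
    ∑ t, nestedWeight qs qb γ t = qb + ((qs : ℝ) - qb) * γ := by
  simp only [nestedWeight]
  rw [Fin.sum_ite_val_lt h, Nat.cast_sub h, mul_one]

theorem nestedM_mulVec (v : Fin qs → ℝ) :
    nestedM qs qb γ ωin ωout *ᵥ v = diagonal (nestedPsi qs qb γ) *ᵥ
      (of (fun r s => if r = s then ωin else ωout) *ᵥ (diagonal (nestedWeight qs qb γ) *ᵥ v)) := by
  rw [nestedM, mulVec_mulVec, mulVec_mulVec]

theorem nestedM_rowSum (t : Fin qs) :
    ∑ u, nestedM qs qb γ ωin ωout t u = nestedPsi qs qb γ t *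
      (ωout * ∑ u, nestedWeight qs qb γ u + (ωin - ωout) * nestedWeight qs qb γ t) := by
  have hrow : ∑ u, nestedM qs qb γ ωin ωout t u = (nestedM qs qb γ ωin ωout *ᵥ 1) t := by
    simp [mulVec, dotProduct]
  have hF : diagonal (nestedWeight qs qb γ) *ᵥ 1 = nestedWeight qs qb γ := by
    funext u; simp [mulVec_diagonal]
  rw [hrow, nestedM_mulVec, hF, of_ite_eq_mulVec, mulVec_diagonal]

theorem nestedM_rowSum_pos (hγ : 1 < γ) (hω0 : 0 < ωout) (hω : ωout < ωin) (t : Fin qs) :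
    0 < ∑ u, nestedM qs qb γ ωin ωout t u := by
  have hγ0 : 0 < γ := one_pos.trans hγ
  have hsum : 0 < ∑ u, nestedWeight qs qb γ u :=
    sum_pos (fun u _ => nestedWeight_pos hγ0 u) ⟨t, mem_univ t⟩
  have hwt := nestedWeight_pos (qb := qb) hγ0 t
  have hψt := nestedPsi_pos (qb := qb) hγ t
  have hdiff : 0 < ωin - ωout := sub_pos.2 hω
  rw [nestedM_rowSum]
  positivity

theorem nestedM_rowSum_of_lt (h : qb ≤ qs) {t : Fin qs} (ht : (t : ℕ) < qb) :
    ∑ u, nestedM qs qb γ ωin ωout t u = γ / nestedZ qs qb γ *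
      (ωin + ((qb : ℝ) - 1) * ωout + ((qs : ℝ) - (qb : ℝ)) * γ * ωout) := by
  rw [nestedM_rowSum, nestedWeight_sum h]
  simp only [nestedPsi, nestedWeight, if_pos ht]
  ring

theorem nestedM_mulVec_single_sub_single {r s : Fin qs} (hr : (r : ℕ) < qb) (hs : (s : ℕ) < qb) :
    nestedM qs qb γ ωin ωout *ᵥ (Pi.single r 1 - Pi.single s 1) =
      (γ / nestedZ qs qb γ * (ωin - ωout)) • (Pi.single r 1 - Pi.single s 1) := by
  have hF : nestedWeight qs qb γ r = nestedWeight qs qb γ s := by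
    simp only [nestedWeight, if_pos hr, if_pos hs]
  have hψ : nestedPsi qs qb γ r = nestedPsi qs qb γ s := by
    simp only [nestedPsi, if_pos hr, if_pos hs]
  rw [nestedM_mulVec, diagonal_mulVec_single_sub_single _ hF, mulVec_smul,
    of_ite_eq_mulVec_of_sum_eq_zero _ _ (Pi.sum_single_sub_single r s), smul_smul, mulVec_smul,
    diagonal_mulVec_single_sub_single _ hψ, smul_smul]
  simp only [nestedWeight, nestedPsi, if_pos hr]
  ring_nf

theorem nestedT_mulVec_single_sub_single (hqs : qb ≤ qs) (hγ : 1 < γ) (hω : ωout < ωin)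
    (hω0 : 0 < ωout) {r s : Fin qs} (hr : (r : ℕ) < qb) (hs : (s : ℕ) < qb) :
    nestedT qs qb γ ωin ωout *ᵥ (Pi.single r 1 - Pi.single s 1) =
      ((ωin - ωout) / (ωin + ((qb : ℝ) - 1) * ωout + ((qs : ℝ) - (qb : ℝ)) * γ * ωout)) •
        (Pi.single r 1 - Pi.single s 1) := by
  -- `(diagonal d)⁻¹` is `0` unless every `d t` is a unit.
  have hD : ∀ t, ∑ u, nestedM qs qb γ ωin ωout t u ≠ 0 := fun t =>
    (nestedM_rowSum_pos hγ hω0 hω t).ne'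
  have hZ : nestedZ qs qb γ ≠ 0 := (nestedZ_pos hγ (Fin.pos r)).ne'
  rw [nestedT_eq, ← mulVec_mulVec, ← mulVec_mulVec, nestedM_mulVec_single_sub_single hr hs,
    mulVec_smul, inv_diagonal_of_ne_zero hD,
    diagonal_mulVec_single_sub_single _ (by simp only [Pi.inv_apply,
      nestedM_rowSum_of_lt hqs hr, nestedM_rowSum_of_lt hqs hs]),
    smul_smul, mulVec_smul, sub_mulVec, one_mulVec,
    vecMulVec_one_mulVec_of_sum_eq_zero _ (Pi.sum_single_sub_single r s), sub_zero,
    Pi.inv_apply, nestedM_rowSum_of_lt hqs hr]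
  congr 1
  field_simp

end Nested

theorem nestedT_eigenvector_inside_general (qs qb : ℕ) (hqs : 2 * qb ≤ qs)
    (γ ωin ωout : ℝ) (hγ : 1 < γ) (hω : ωout < ωin) (hω0 : 0 < ωout)
    (r s : Fin qs) (hr : (r : ℕ) < qb) (hs : (s : ℕ) < qb) (hrs : r ≠ s) :
    nestedT qs qb γ ωin ωout *ᵥ (Pi.single r 1 - Pi.single s 1) =
      ((ωin - ωout) / (ωin + ((qb : ℝ) - 1) * ωout + ((qs : ℝ) - (qb : ℝ)) * γ * ωout)) •
        (Pi.single r 1 - Pi.single s 1) ∧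
    Module.End.HasEigenvalue (Matrix.toLin' (nestedT qs qb γ ωin ωout))
      ((ωin - ωout) / (ωin + ((qb : ℝ) - 1) * ωout + ((qs : ℝ) - (qb : ℝ)) * γ * ωout)) := by
  have key := nestedT_mulVec_single_sub_single (by omega : qb ≤ qs) hγ hω hω0 hr hs
  exact ⟨key, hasEigenvalue_toLin'_of_mulVec_eq_smul (Pi.single_sub_single_ne_zero hrs) key⟩

/-- For indices `r ≠ s` both among the first `qb` coordinates (i.e. within
node `i`'s own category), `e_r - e_s` is an eigenvector of the nested-case
transfer matrix `T` with eigenvalue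
`λ_a = (ωin - ωout)/(ωin + (qb - 1)·ωout + (qs - qb)·γ·ωout)`;
in particular `λ_a` is an eigenvalue of `T`. -/
theorem nestedT_eigenvector_inside (qs qb : ℕ) (hqb : 2 ≤ qb) (hqs : 2 * qb ≤ qs)
    (γ ωin ωout : ℝ) (hγ : 1 < γ) (hω : ωout < ωin) (hω0 : 0 < ωout)
    (r s : Fin qs) (hr : (r : ℕ) < qb) (hs : (s : ℕ) < qb) (hrs : r ≠ s) :
    nestedT qs qb γ ωin ωout *ᵥ (Pi.single r 1 - Pi.single s 1) =
      ((ωin - ωout) / (ωin + ((qb : ℝ) - 1) * ωout + ((qs : ℝ) - (qb : ℝ)) * γ * ωout)) •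
        (Pi.single r 1 - Pi.single s 1) ∧
    Module.End.HasEigenvalue (Matrix.toLin' (nestedT qs qb γ ωin ωout))
      ((ωin - ωout) / (ωin + ((qb : ℝ) - 1) * ωout + ((qs : ℝ) - (qb : ℝ)) * γ * ωout)) :=
  nestedT_eigenvector_inside_general qs qb hqs γ ωin ωout hγ hω hω0 r s hr hs hrs
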